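/- For β > 0 and a matrix Z with SVD Z = U diag(σ) V^T (U, V orthonormal, σ ∈ R^k_+ the positive singular values), the proximal operator of β times the nuclear norm satisfies prox_{β‖·‖_*}(Z) = U diag([σ − β e]_+) V^T, where e = (1,…,1) and [·]_+ is the componentwise positive part. -/

import Mathlib

/-!
Put `P = U diag([σ - β]₊) Vᵀ` and `G = U diag(min(σ/β, 1)) Vᵀ`, so that `Z - P = β G`.
Since `G` is a contraction, `tr(Gᵀ Y) ≤ ‖Y‖_*` for every `Y` (pair `G` with the singular
vectors of `Y`, obtained by diagonalising `Yᵀ Y`), while `tr(Gᵀ P) = ∑ [σ - β]₊ ≥ ‖P‖_*`: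
`G` is a subgradient of the nuclear norm at `P`. Expanding `‖Z - Y‖² = ‖(Z - P) - (Y - P)‖²`
then gives `F(Y) ≥ F(P) + ½‖Y - P‖²` for the prox objective `F`, which yields minimality and
uniqueness at once.
-/

open Matrix

noncomputable def frobNorm {m n : ℕ} (X : Matrix (Fin m) (Fin n) ℝ) : ℝ :=
  Real.sqrt (∑ i, ∑ j, (X i j) ^ 2)

noncomputable def nuclearNorm {m n : ℕ} (X : Matrix (Fin m) (Fin n) ℝ) : ℝ :=
  ∑ i, Real.sqrt ((Matrix.isHermitian_conjTranspose_mul_self X).eigenvalues i)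

/-- `P` is the proximal point of `g` at `Z`, i.e. a minimizer of
`Y ↦ (1/2)‖Z − Y‖² + g(Y)` (Frobenius norm). -/
def IsProxPoint {m n : ℕ} (g : Matrix (Fin m) (Fin n) ℝ → ℝ)
    (Z P : Matrix (Fin m) (Fin n) ℝ) : Prop :=
  ∀ Y, (1 / 2) * frobNorm (Z - P) ^ 2 + g P ≤ (1 / 2) * frobNorm (Z - Y) ^ 2 + g Y

namespace Matrix

variable {k m n : Type*} [Fintype k] [Fintype m] [Fintype n]

def IsContraction (G : Matrix m n ℝ) : Prop :=
  ∀ v, G *ᵥ v ⬝ᵥ G *ᵥ v ≤ v ⬝ᵥ v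

lemma mulVec_dotProduct_mulVec_self (A : Matrix m n ℝ) (v : n → ℝ) :
    A *ᵥ v ⬝ᵥ A *ᵥ v = v ⬝ᵥ (Aᵀ * A) *ᵥ v := by
  rw [← mulVec_mulVec, dotProduct_mulVec, ← mulVec_transpose, dotProduct_comm]

lemma transpose_mulVec_dotProduct_self_le [DecidableEq n] {B : Matrix m n ℝ} (hB : Bᵀ * B = 1)
    (v : m → ℝ) : Bᵀ *ᵥ v ⬝ᵥ Bᵀ *ᵥ v ≤ v ⬝ᵥ v := by
  set u := Bᵀ *ᵥ v
  have hcross : v ⬝ᵥ B *ᵥ u = u ⬝ᵥ u := by rw [dotProduct_mulVec, ← mulVec_transpose]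
  have hproj : B *ᵥ u ⬝ᵥ B *ᵥ u = u ⬝ᵥ u := by
    rw [mulVec_dotProduct_mulVec_self, hB, one_mulVec]
  have hres : 0 ≤ (v - B *ᵥ u) ⬝ᵥ (v - B *ᵥ u) := by
    simpa using dotProduct_star_self_nonneg (v - B *ᵥ u)
  rw [sub_dotProduct, dotProduct_sub, dotProduct_sub, dotProduct_comm (B *ᵥ u) v, hcross,
    hproj] at hres
  linarith

lemma dotProduct_le_sqrt_mul_sqrt (x y : n → ℝ) :
    x ⬝ᵥ y ≤ √(x ⬝ᵥ x) * √(y ⬝ᵥ y) := by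
  simpa only [dotProduct, pow_two] using Real.sum_mul_le_sqrt_mul_sqrt Finset.univ x y

lemma dotProduct_diagonal_mulVec_le [DecidableEq n] {e : n → ℝ} (he : ∀ i, e i ≤ 1)
    (u : n → ℝ) : u ⬝ᵥ diagonal e *ᵥ u ≤ u ⬝ᵥ u := by
  simp only [dotProduct, mulVec_diagonal]
  refine Finset.sum_le_sum fun i _ => ?_
  nlinarith [he i, mul_self_nonneg (u i)]

lemma trace_transpose_mul_eq_sum_dotProduct (A B : Matrix m n ℝ) :
    trace (Aᵀ * B) = ∑ j, Aᵀ j ⬝ᵥ Bᵀ j :=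
  rfl

lemma trace_transpose_mul_mul_transpose (G : Matrix m n ℝ) (M : Matrix m k ℝ)
    (W : Matrix n k ℝ) : trace (Gᵀ * (M * Wᵀ)) = ∑ j, G *ᵥ Wᵀ j ⬝ᵥ Mᵀ j := by
  rw [← Matrix.mul_assoc, trace_mul_comm, ← Matrix.mul_assoc, ← transpose_mul,
    trace_transpose_mul_eq_sum_dotProduct]
  rfl

variable [DecidableEq k]

omit [Fintype n] in
lemma transpose_mul_diagonal_mul_transpose {A : Matrix m k ℝ} {a : k → ℝ}
    (hA : Aᵀ * A = diagonal a) (B : Matrix n k ℝ) (c d : k → ℝ) :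
    (A * diagonal c * Bᵀ)ᵀ * (A * diagonal d * Bᵀ) =
      B * diagonal (fun i => c i * a i * d i) * Bᵀ := by
  simp only [transpose_mul, transpose_transpose, diagonal_transpose, Matrix.mul_assoc]
  rw [← Matrix.mul_assoc Aᵀ, hA, ← Matrix.mul_assoc (diagonal a), diagonal_mul_diagonal,
    ← Matrix.mul_assoc (diagonal c), diagonal_mul_diagonal]
  simp only [mul_assoc]

lemma trace_transpose_mul_diagonal_mul_transpose {A : Matrix m k ℝ} {a : k → ℝ}
    (hA : Aᵀ * A = diagonal a) {B : Matrix n k ℝ} (hB : Bᵀ * B = 1) (c d : k → ℝ) :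
    trace ((A * diagonal c * Bᵀ)ᵀ * (A * diagonal d * Bᵀ)) = ∑ i, c i * a i * d i := by
  rw [transpose_mul_diagonal_mul_transpose hA, trace_mul_cycle, hB, Matrix.one_mul,
    trace_diagonal]

lemma IsContraction.mul_diagonal_mul_transpose {A : Matrix m k ℝ} {a : k → ℝ}
    (hA : Aᵀ * A = diagonal a) {B : Matrix n k ℝ} (hB : Bᵀ * B = 1) {c : k → ℝ}
    (hac : ∀ i, c i * a i * c i ≤ 1) : IsContraction (A * diagonal c * Bᵀ) := by
  intro v
  calc (A * diagonal c * Bᵀ) *ᵥ v ⬝ᵥ (A * diagonal c * Bᵀ) *ᵥ v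
      = Bᵀ *ᵥ v ⬝ᵥ diagonal (fun i => c i * a i * c i) *ᵥ Bᵀ *ᵥ v := by
        rw [mulVec_dotProduct_mulVec_self, transpose_mul_diagonal_mul_transpose hA,
          ← mulVec_mulVec, ← mulVec_mulVec, dotProduct_mulVec, ← mulVec_transpose]
    _ ≤ Bᵀ *ᵥ v ⬝ᵥ Bᵀ *ᵥ v := dotProduct_diagonal_mulVec_le hac _
    _ ≤ v ⬝ᵥ v := transpose_mulVec_dotProduct_self_le hB v

omit [Fintype k] in
lemma dotProduct_self_col_eq {A : Matrix m k ℝ} {a : k → ℝ} (hA : Aᵀ * A = diagonal a)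
    (j : k) : Aᵀ j ⬝ᵥ Aᵀ j = a j := by
  change (Aᵀ * A) j j = a j
  rw [hA, diagonal_apply_eq]

omit [Fintype k] in
lemma dotProduct_self_col_eq_one {A : Matrix m k ℝ} (hA : Aᵀ * A = 1) (j : k) :
    Aᵀ j ⬝ᵥ Aᵀ j = 1 :=
  dotProduct_self_col_eq (hA.trans diagonal_one.symm) j

omit [DecidableEq k] in
lemma IsContraction.mulVec_dotProduct_le {G : Matrix m n ℝ} (hG : IsContraction G)
    (x : n → ℝ) (y : m → ℝ) : G *ᵥ x ⬝ᵥ y ≤ √(x ⬝ᵥ x) * √(y ⬝ᵥ y) := by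
  refine (dotProduct_le_sqrt_mul_sqrt _ _).trans ?_
  gcongr
  exact hG x

lemma exists_orthogonal_gram_eq_diagonal_eigenvalues [DecidableEq n] (Y : Matrix m n ℝ) :
    ∃ W : Matrix n n ℝ, Wᵀ * W = 1 ∧ W * Wᵀ = 1 ∧
      (Y * W)ᵀ * (Y * W) = diagonal (isHermitian_conjTranspose_mul_self Y).eigenvalues := by
  set H := isHermitian_conjTranspose_mul_self Y
  have hW := H.eigenvectorUnitary.2
  rw [mem_unitaryGroup_iff', star_eq_conjTranspose, conjTranspose_eq_transpose_of_trivial] at hW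
  refine ⟨H.eigenvectorUnitary, hW, mul_eq_one_comm.mp hW, ?_⟩
  have := H.conjStarAlgAut_star_eigenvectorUnitary
  rw [Unitary.conjStarAlgAut_star_apply] at this
  simpa [star_eq_conjTranspose, conjTranspose_eq_transpose_of_trivial, Matrix.mul_assoc] using this

end Matrix

section Fin

variable {m n k : ℕ}

lemma trace_transpose_mul_le_nuclearNorm {G : Matrix (Fin m) (Fin n) ℝ} (hG : IsContraction G)
    (Y : Matrix (Fin m) (Fin n) ℝ) : trace (Gᵀ * Y) ≤ nuclearNorm Y := by
  obtain ⟨W, hW, hW', hgram⟩ := exists_orthogonal_gram_eq_diagonal_eigenvalues Y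
  calc trace (Gᵀ * Y) = trace (Gᵀ * (Y * W * Wᵀ)) := by
        rw [Matrix.mul_assoc, hW', Matrix.mul_one]
    _ = ∑ j, G *ᵥ Wᵀ j ⬝ᵥ (Y * W)ᵀ j := trace_transpose_mul_mul_transpose _ _ _
    _ ≤ ∑ j, √(Wᵀ j ⬝ᵥ Wᵀ j) * √((Y * W)ᵀ j ⬝ᵥ (Y * W)ᵀ j) :=
        Finset.sum_le_sum fun j _ => hG.mulVec_dotProduct_le _ _
    _ = nuclearNorm Y := by
        simp only [dotProduct_self_col_eq_one hW, dotProduct_self_col_eq hgram, Real.sqrt_one,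
          one_mul, nuclearNorm]

lemma exists_isContraction_trace_eq_nuclearNorm (X : Matrix (Fin m) (Fin n) ℝ) :
    ∃ G : Matrix (Fin m) (Fin n) ℝ, IsContraction G ∧ trace (Gᵀ * X) = nuclearNorm X := by
  obtain ⟨W, hW, hW', hgram⟩ := exists_orthogonal_gram_eq_diagonal_eigenvalues X
  set μ := (isHermitian_conjTranspose_mul_self X).eigenvalues
  have hμ : ∀ j, 0 ≤ μ j := eigenvalues_conjTranspose_mul_self_nonneg X
  have hX : X = X * W * diagonal (fun (_ : Fin n) => (1 : ℝ)) * Wᵀ := by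
    rw [diagonal_one, Matrix.mul_one, Matrix.mul_assoc, hW', Matrix.mul_one]
  -- The polar factor of `X`; since `(√0)⁻¹ = 0`, the kernel of `X` needs no separate case.
  refine ⟨X * W * diagonal (fun j => (√(μ j))⁻¹) * Wᵀ,
    .mul_diagonal_mul_transpose hgram hW fun j => ?_, ?_⟩
  · calc (√(μ j))⁻¹ * μ j * (√(μ j))⁻¹ = μ j / (√(μ j) * √(μ j)) := by ring
      _ = μ j / μ j := by rw [Real.mul_self_sqrt (hμ j)]
      _ ≤ 1 := div_self_le_one _
  · nth_rw 2 [hX]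
    rw [trace_transpose_mul_diagonal_mul_transpose hgram hW, nuclearNorm]
    refine Finset.sum_congr rfl fun j _ => ?_
    rw [mul_one, inv_mul_eq_div, Real.div_sqrt]

lemma nuclearNorm_mul_diagonal_mul_transpose_le {U : Matrix (Fin m) (Fin k) ℝ}
    {V : Matrix (Fin n) (Fin k) ℝ} (hU : Uᵀ * U = 1) (hV : Vᵀ * V = 1) {d : Fin k → ℝ}
    (hd : ∀ i, 0 ≤ d i) : nuclearNorm (U * diagonal d * Vᵀ) ≤ ∑ i, d i := by
  obtain ⟨G, hG, hGX⟩ := exists_isContraction_trace_eq_nuclearNorm (U * diagonal d * Vᵀ)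
  rw [← hGX, trace_transpose_mul_mul_transpose]
  refine Finset.sum_le_sum fun i _ => ?_
  have hcol : (U * diagonal d)ᵀ i = d i • Uᵀ i := by
    ext j
    simp [mul_diagonal, mul_comm]
  calc G *ᵥ Vᵀ i ⬝ᵥ (U * diagonal d)ᵀ i = d i * (G *ᵥ Vᵀ i ⬝ᵥ Uᵀ i) := by
        rw [hcol, dotProduct_smul, smul_eq_mul]
    _ ≤ d i * (√(Vᵀ i ⬝ᵥ Vᵀ i) * √(Uᵀ i ⬝ᵥ Uᵀ i)) := by
        gcongr
        · exact hd i
        · exact hG.mulVec_dotProduct_le _ _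
    _ = d i := by
        rw [dotProduct_self_col_eq_one hU, dotProduct_self_col_eq_one hV, Real.sqrt_one,
          mul_one, mul_one]

lemma frobNorm_sq (X : Matrix (Fin m) (Fin n) ℝ) : frobNorm X ^ 2 = trace (Xᵀ * X) := by
  rw [frobNorm, Real.sq_sqrt (by positivity), trace_transpose_mul_eq_sum_dotProduct,
    Finset.sum_comm]
  simp only [dotProduct, transpose_apply, pow_two]

lemma frobNorm_sq_eq_zero_iff {X : Matrix (Fin m) (Fin n) ℝ} : frobNorm X ^ 2 = 0 ↔ X = 0 := by
  rw [frobNorm_sq, ← vec_dotProduct_vec, dotProduct_self_eq_zero, vec_eq_zero_iff]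

lemma frobNorm_sub_sq (A B : Matrix (Fin m) (Fin n) ℝ) :
    frobNorm (A - B) ^ 2 = frobNorm A ^ 2 - 2 * trace (Aᵀ * B) + frobNorm B ^ 2 := by
  simp only [frobNorm_sq, transpose_sub, Matrix.sub_mul, Matrix.mul_sub, trace_sub]
  rw [← trace_transpose (Bᵀ * A), transpose_mul, transpose_transpose]
  ring

lemma nuclearNorm_prox_growth {β : ℝ} (hβ : 0 ≤ β) {Z P G : Matrix (Fin m) (Fin n) ℝ}
    (hZP : Z - P = β • G) (hG : IsContraction G) (hP : nuclearNorm P ≤ trace (Gᵀ * P))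
    (Y : Matrix (Fin m) (Fin n) ℝ) :
    (1 / 2) * frobNorm (Z - P) ^ 2 + β * nuclearNorm P + (1 / 2) * frobNorm (Y - P) ^ 2 ≤
      (1 / 2) * frobNorm (Z - Y) ^ 2 + β * nuclearNorm Y := by
  have hexpand : frobNorm (Z - Y) ^ 2 =
      frobNorm (Z - P) ^ 2 - 2 * trace ((Z - P)ᵀ * (Y - P)) + frobNorm (Y - P) ^ 2 := by
    rw [← frobNorm_sub_sq, sub_sub_sub_cancel_right]
  have hcross : trace ((Z - P)ᵀ * (Y - P)) = β * (trace (Gᵀ * Y) - trace (Gᵀ * P)) := by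
    rw [hZP, transpose_smul, Matrix.smul_mul, trace_smul, smul_eq_mul, Matrix.mul_sub, trace_sub,
      mul_sub]
  have hY := mul_le_mul_of_nonneg_left (trace_transpose_mul_le_nuclearNorm hG Y) hβ
  have hP' := mul_le_mul_of_nonneg_left hP hβ
  linarith

lemma isProxPoint_and_unique_of_growth {g : Matrix (Fin m) (Fin n) ℝ → ℝ}
    {Z P : Matrix (Fin m) (Fin n) ℝ}
    (h : ∀ Y, (1 / 2) * frobNorm (Z - P) ^ 2 + g P + (1 / 2) * frobNorm (Y - P) ^ 2 ≤
      (1 / 2) * frobNorm (Z - Y) ^ 2 + g Y) :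
    IsProxPoint g Z P ∧ ∀ P', IsProxPoint g Z P' → P' = P := by
  refine ⟨fun Y => by nlinarith [h Y, sq_nonneg (frobNorm (Y - P))], fun P' hP' => ?_⟩
  have hsq : frobNorm (P' - P) ^ 2 ≤ 0 := by linarith [h P', hP' P]
  exact sub_eq_zero.mp (frobNorm_sq_eq_zero_iff.mp (le_antisymm hsq (sq_nonneg _)))

end Fin

/-- Singular value soft-thresholding: the proximal operator of `β‖·‖_*` at
`Z = U diag(σ) Vᵀ` is `U diag([σ − β]₊) Vᵀ`, and it is the unique proximal point. -/
theorem prox_nuclearNorm_soft_threshold {m n k : ℕ}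
    (β : ℝ) (hβ : 0 < β)
    (Z : Matrix (Fin m) (Fin n) ℝ)
    (U : Matrix (Fin m) (Fin k) ℝ) (V : Matrix (Fin n) (Fin k) ℝ) (σ : Fin k → ℝ)
    (hU : Uᵀ * U = 1) (hV : Vᵀ * V = 1) (hσ : ∀ i, 0 < σ i)
    (hSVD : Z = U * Matrix.diagonal σ * Vᵀ) :
    IsProxPoint (fun Y => β * nuclearNorm Y) Z
        (U * Matrix.diagonal (fun i => max (σ i - β) 0) * Vᵀ) ∧
      ∀ P, IsProxPoint (fun Y => β * nuclearNorm Y) Z P →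
        P = U * Matrix.diagonal (fun i => max (σ i - β) 0) * Vᵀ := by
  set d : Fin k → ℝ := fun i => max (σ i - β) 0
  set t : Fin k → ℝ := fun i => min (σ i / β) 1
  have hd : ∀ i, 0 ≤ d i := fun i => le_max_right _ _
  have ht : ∀ i, t i * 1 * t i ≤ 1 := fun i => by
    have : 0 ≤ t i := le_min (div_nonneg (hσ i).le hβ.le) zero_le_one
    nlinarith [min_le_right (σ i / β) 1]
  have htd : ∀ i, t i * 1 * d i = d i := fun i => by
    rcases le_total (σ i) β with h | h
    · simp [d, h]
    · simp [t, (one_le_div hβ).mpr h]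
  have hσd : (fun i => σ i - d i) = β • t := funext fun i => by
    simp only [Pi.smul_apply, smul_eq_mul, t, d]
    rw [mul_min_of_nonneg _ _ hβ.le, mul_div_cancel₀ _ hβ.ne', mul_one]
    rcases le_total (σ i) β with h | h <;> simp [h]
  have hU' : Uᵀ * U = diagonal fun _ => 1 := hU.trans diagonal_one.symm
  have hZP : Z - U * diagonal d * Vᵀ = β • (U * diagonal t * Vᵀ) := by
    rw [hSVD, ← Matrix.sub_mul, ← Matrix.mul_sub, diagonal_sub, hσd, diagonal_smul,
      Matrix.mul_smul, Matrix.smul_mul]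
  have hP : nuclearNorm (U * diagonal d * Vᵀ) ≤
      trace ((U * diagonal t * Vᵀ)ᵀ * (U * diagonal d * Vᵀ)) := by
    rw [trace_transpose_mul_diagonal_mul_transpose hU' hV, Finset.sum_congr rfl fun i _ => htd i]
    exact nuclearNorm_mul_diagonal_mul_transpose_le hU hV hd
  exact isProxPoint_and_unique_of_growth
    (nuclearNorm_prox_growth hβ.le hZP (.mul_diagonal_mul_transpose hU' hV ht) hP)
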